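/- arXiv:1005.0160 — 2 statements merged into one kernel-verified Lean document; each statement's English description precedes it below -/
import Mathlib

section
/- Let Θ be a subinterval of ℝ with left endpoint θ₋ and let g : [0,∞) × Θ → ℝ satisfy the Spence–Mirrlees condition. Suppose v : Θ → ℝ is g-convex, i.e. v(θ) = sup_{x ≥ 0}(g(x,θ) − v^g(x)) for all θ ∈ Θ, where v^g(x) = sup_{θ∈Θ}(g(x,θ) − v(θ)). Let ψ : [0,∞) → ℝ ∪ {+∞} satisfy ψ^g = v on Θ, where ψ^g(θ) = sup_{x ≥ 0}(g(x,θ) − ψ(x)), and for θ ∈ Θ set A(θ) = { x ≥ 0 : g(x,θ) − ψ(x) = v(θ) }. Then: (i) A(θ) ⊆ ∂^g v(θ) = { x ≥ 0 : v(θ) + v^g(x) = g(x,θ) } for every θ ∈ Θ; (ii) for every x ∈ A(θ), ψ(x) = v^g(x); (iii) if in addition x ↦ g(x,θ) − ψ(x) is upper semicontinuous for each θ ∈ Θ, then A(θ) ≠ ∅ for every θ ∈ Θ such that there exists θ̃ ∈ Θ with θ̃ > θ and A(θ̃) ≠ ∅. -/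
open Set

/-- The Spence–Mirrlees condition for `g = g(x,θ)` on `Dx × Dθ`. -/
def SpenceMirrlees (Dx Dθ : Set ℝ) (g : ℝ → ℝ → ℝ) : Prop :=
  ContDiff ℝ 2 (Function.uncurry g) ∧
  (∀ x ∈ Dx, StrictMonoOn (fun θ => deriv (fun x' => g x' θ) x) Dθ) ∧
  (∀ θ ∈ Dθ, StrictMonoOn (fun x => deriv (fun θ' => g x θ') θ) Dx)

/-- `v^g(x) = sup_{θ ∈ Θ}(g(x,θ) - v(θ))`, the `g`-convex dual of `v : Θ → ℝ`. -/
noncomputable def gDualV (Θ : Set ℝ) (g : ℝ → ℝ → ℝ) (v : ℝ → ℝ) (x : ℝ) : EReal :=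
  ⨆ θ ∈ Θ, ((g x θ : EReal) - (v θ : EReal))

/-- `w^g(θ) = sup_{x ≥ 0}(g(x,θ) - w(x))`, the `g`-convex dual of `w : [0,∞) → ℝ∪{+∞}`. -/
noncomputable def gDualW (g : ℝ → ℝ → ℝ) (w : ℝ → EReal) (θ : ℝ) : EReal :=
  ⨆ x ∈ Ici (0:ℝ), ((g x θ : EReal) - w x)

/-- `v` is `g`-convex on `Θ` if `(v^g)^g = v` there. -/
def GConvex (Θ : Set ℝ) (g : ℝ → ℝ → ℝ) (v : ℝ → ℝ) : Prop :=
  ∀ θ ∈ Θ, (v θ : EReal) = ⨆ x ∈ Ici (0:ℝ), ((g x θ : EReal) - gDualV Θ g v x)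

/-- The `g`-subdifferential `∂^g v(θ) = { x ≥ 0 : v(θ) + v^g(x) = g(x,θ) }`. -/
def gSubdiff (Θ : Set ℝ) (g : ℝ → ℝ → ℝ) (v : ℝ → ℝ) (θ : ℝ) : Set ℝ :=
  {x | 0 ≤ x ∧ (v θ : EReal) + gDualV Θ g v x = (g x θ : EReal)}

/-!
If `x` attains the supremum defining `ψ^g(θ) = v(θ)`, then `ψ(x) = g(x,θ) - v(θ)` is finite,
and `ψ^g ≤ v` gives `g(x,θ') - v(θ') ≤ ψ(x)` for every `θ'`, so `ψ(x) = v^g(x)` and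
`x ∈ ∂^g v(θ)`. For attainment, Spence–Mirrlees makes `x ↦ g(x,θ) - g(x,θ')` nonincreasing when
`θ ≤ θ'`; hence beyond a maximiser `x'` of `g(·,θ') - ψ` the function `g(·,θ) - ψ` is at most its
value at `x'`, and it suffices to maximise it on the compact interval `[0, x']`.
-/

theorem EReal.eq_coe_sub_of_coe_sub_eq_coe {a c : ℝ} {b : EReal} (h : (a : EReal) - b = c) :
    b = ((a - c : ℝ) : EReal) := by
  induction b using EReal.rec with
  | bot => simp at h
  | top => simp at h
  | coe b =>
    norm_cast at h ⊢
    linarith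

section gDual

variable {Θ : Set ℝ} {g : ℝ → ℝ → ℝ} {v : ℝ → ℝ} {w : ℝ → EReal} {θ x : ℝ}

theorem sub_le_gDualW (hx : 0 ≤ x) : (g x θ : EReal) - w x ≤ gDualW g w θ :=
  le_biSup (fun x => (g x θ : EReal) - w x) (mem_Ici.mpr hx)

theorem sub_le_gDualV (hθ : θ ∈ Θ) : (g x θ : EReal) - v θ ≤ gDualV Θ g v x :=
  le_biSup (fun θ => (g x θ : EReal) - v θ) hθ

theorem gDualV_le_of_gDualW_le (h : ∀ θ ∈ Θ, gDualW g w θ ≤ v θ) (hx : 0 ≤ x) :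
    gDualV Θ g v x ≤ w x := by
  refine iSup₂_le fun θ hθ => ?_
  have hle : (g x θ : EReal) - w x ≤ v θ := (sub_le_gDualW hx).trans (h θ hθ)
  rw [EReal.sub_le_iff_le_add (.inr (EReal.coe_ne_top _)) (.inr (EReal.coe_ne_bot _))] at hle
  exact EReal.sub_le_of_le_add' hle

theorem isMaxOn_iff_gDualW_eq (hx : 0 ≤ x) :
    IsMaxOn (fun x => (g x θ : EReal) - w x) (Ici 0) x ↔ gDualW g w θ = g x θ - w x := by
  refine ⟨fun hmax => le_antisymm (iSup₂_le fun y hy => hmax hy) (sub_le_gDualW hx),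
    fun heq y hy => ?_⟩
  change (g y θ : EReal) - w y ≤ g x θ - w x
  rw [← heq]
  exact sub_le_gDualW hy

theorem eq_gDualV_of_sub_eq (hw : ∀ θ ∈ Θ, gDualW g w θ ≤ v θ) (hθ : θ ∈ Θ) (hx : 0 ≤ x)
    (heq : (g x θ : EReal) - w x = v θ) : w x = gDualV Θ g v x := by
  refine le_antisymm ?_ (gDualV_le_of_gDualW_le hw hx)
  rw [EReal.eq_coe_sub_of_coe_sub_eq_coe heq]
  exact sub_le_gDualV hθ

theorem mem_gSubdiff_of_sub_eq (hw : ∀ θ ∈ Θ, gDualW g w θ ≤ v θ) (hθ : θ ∈ Θ) (hx : 0 ≤ x)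
    (heq : (g x θ : EReal) - w x = v θ) : x ∈ gSubdiff Θ g v θ := by
  refine ⟨hx, ?_⟩
  rw [← eq_gDualV_of_sub_eq hw hθ hx heq, EReal.eq_coe_sub_of_coe_sub_eq_coe heq]
  norm_cast
  ring

end gDual

namespace SpenceMirrlees

variable {Θ : Set ℝ} {g : ℝ → ℝ → ℝ} {θ θ' : ℝ}

theorem antitoneOn_sub (hSM : SpenceMirrlees (Ici 0) Θ g) (hθ : θ ∈ Θ) (hθ' : θ' ∈ Θ)
    (hle : θ ≤ θ') : AntitoneOn (fun x => g x θ - g x θ') (Ici 0) := by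
  obtain ⟨hg, hderiv, -⟩ := hSM
  have hd : ∀ t, Differentiable ℝ fun x => g x t := fun t =>
    (hg.differentiable two_ne_zero).comp (differentiable_id.prodMk (differentiable_const t))
  refine antitoneOn_of_deriv_nonpos (convex_Ici 0)
    ((hd θ).continuous.sub (hd θ').continuous).continuousOn
    ((hd θ).sub (hd θ')).differentiableOn fun x hx => ?_
  rw [interior_Ici] at hx
  rw [deriv_fun_sub (hd θ x) (hd θ' x), sub_nonpos]
  exact (hderiv x (mem_Ici.mpr (le_of_lt hx))).monotoneOn hθ hθ' hle

variable {ψ : ℝ → EReal} {x' : ℝ}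

/-- Monotone comparative statics: maximisers cannot move to the right as `θ` decreases. -/
theorem sub_le_sub_of_isMaxOn (hSM : SpenceMirrlees (Ici 0) Θ g) (hθ : θ ∈ Θ) (hθ' : θ' ∈ Θ)
    (hle : θ ≤ θ') (hx' : 0 ≤ x') (hmax : IsMaxOn (fun x => (g x θ' : EReal) - ψ x) (Ici 0) x')
    {x : ℝ} (hx : x' ≤ x) : (g x θ : EReal) - ψ x ≤ g x' θ - ψ x' := by
  have hsplit : ∀ y,
      (g y θ : EReal) - ψ y = ((g y θ' : EReal) - ψ y) + ((g y θ - g y θ' : ℝ)) := fun y => by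
    rw [sub_eq_add_neg, sub_eq_add_neg, add_right_comm, ← EReal.coe_add, add_sub_cancel]
  rw [hsplit x, hsplit x']
  exact add_le_add (hmax (mem_Ici.mpr (hx'.trans hx))) (EReal.coe_le_coe_iff.mpr
    (hSM.antitoneOn_sub hθ hθ' hle hx' (hx'.trans hx) hx))

theorem exists_isMaxOn_of_le (hSM : SpenceMirrlees (Ici 0) Θ g) (hθ : θ ∈ Θ) (hθ' : θ' ∈ Θ)
    (hle : θ ≤ θ') (husc : UpperSemicontinuousOn (fun x => (g x θ : EReal) - ψ x) (Ici 0))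
    (hx' : 0 ≤ x') (hmax : IsMaxOn (fun x => (g x θ' : EReal) - ψ x) (Ici 0) x') :
    ∃ x₀, 0 ≤ x₀ ∧ IsMaxOn (fun x => (g x θ : EReal) - ψ x) (Ici 0) x₀ := by
  obtain ⟨x₀, ⟨hx₀, -⟩, hmax₀⟩ := (husc.mono Icc_subset_Ici_self).exists_isMaxOn
    (nonempty_Icc.mpr hx') isCompact_Icc
  refine ⟨x₀, hx₀, fun x hx => ?_⟩
  rcases le_total x x' with hxx' | hxx'
  · exact hmax₀ ⟨hx, hxx'⟩
  · exact (sub_le_sub_of_isMaxOn hSM hθ hθ' hle hx' hmax hxx').trans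
      (hmax₀ ⟨hx', le_rfl⟩)

end SpenceMirrlees

theorem gSubdiff_of_attained_general
    (Θ : Set ℝ)
    (g : ℝ → ℝ → ℝ) (hSM : SpenceMirrlees (Ici 0) Θ g)
    (v : ℝ → ℝ)
    (ψ : ℝ → EReal) (hψg : ∀ θ ∈ Θ, gDualW g ψ θ = (v θ : EReal)) :
    (∀ θ ∈ Θ, ∀ x : ℝ, 0 ≤ x → (g x θ : EReal) - ψ x = (v θ : EReal) →
      x ∈ gSubdiff Θ g v θ) ∧
    (∀ θ ∈ Θ, ∀ x : ℝ, 0 ≤ x → (g x θ : EReal) - ψ x = (v θ : EReal) →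
      ψ x = gDualV Θ g v x) ∧
    ((∀ θ ∈ Θ, UpperSemicontinuousOn (fun x => (g x θ : EReal) - ψ x) (Ici 0)) →
      ∀ θ ∈ Θ, (∃ θ' ∈ Θ, θ < θ' ∧
          ∃ x' : ℝ, 0 ≤ x' ∧ (g x' θ' : EReal) - ψ x' = (v θ' : EReal)) →
        ∃ x : ℝ, 0 ≤ x ∧ (g x θ : EReal) - ψ x = (v θ : EReal)) := by
  have hψle : ∀ θ ∈ Θ, gDualW g ψ θ ≤ v θ := fun θ hθ => (hψg θ hθ).le
  refine ⟨fun θ hθ x hx heq => mem_gSubdiff_of_sub_eq hψle hθ hx heq,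
    fun θ hθ x hx heq => eq_gDualV_of_sub_eq hψle hθ hx heq, ?_⟩
  rintro husc θ hθ ⟨θ', hθ', hlt, x', hx', heq'⟩
  have hmax' := (isMaxOn_iff_gDualW_eq hx').mpr (by rw [hψg θ' hθ', heq'])
  obtain ⟨x₀, hx₀, hmax₀⟩ := hSM.exists_isMaxOn_of_le hθ hθ' hlt.le (husc θ hθ) hx' hmax'
  exact ⟨x₀, hx₀, by rw [← hψg θ hθ, (isMaxOn_iff_gDualW_eq hx₀).mp hmax₀]⟩

/-- Suppose `v` is `g`-convex and `ψ^g = v` on `Θ`; let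
`A(θ) = { x ≥ 0 : g(x,θ) - ψ(x) = v(θ) }`. Then (i) `A(θ) ⊆ ∂^g v(θ)`;
(ii) `ψ = v^g` on `A(θ)`; and (iii) if `x ↦ g(x,θ) - ψ(x)` is upper semicontinuous for
each `θ ∈ Θ`, then `A(θ) ≠ ∅` whenever some `θ' ∈ Θ` with `θ' > θ` has `A(θ') ≠ ∅`. -/
theorem gSubdiff_of_attained
    (Θ : Set ℝ) (hΘ : Θ.Nonempty) (hΘI : Θ.OrdConnected)
    (g : ℝ → ℝ → ℝ) (hSM : SpenceMirrlees (Ici 0) Θ g)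
    (v : ℝ → ℝ) (hvconv : GConvex Θ g v)
    (ψ : ℝ → EReal) (hψg : ∀ θ ∈ Θ, gDualW g ψ θ = (v θ : EReal)) :
    (∀ θ ∈ Θ, ∀ x : ℝ, 0 ≤ x → (g x θ : EReal) - ψ x = (v θ : EReal) →
      x ∈ gSubdiff Θ g v θ) ∧
    (∀ θ ∈ Θ, ∀ x : ℝ, 0 ≤ x → (g x θ : EReal) - ψ x = (v θ : EReal) →
      ψ x = gDualV Θ g v x) ∧
    ((∀ θ ∈ Θ, UpperSemicontinuousOn (fun x => (g x θ : EReal) - ψ x) (Ici 0)) →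
      ∀ θ ∈ Θ, (∃ θ' ∈ Θ, θ < θ' ∧
          ∃ x' : ℝ, 0 ≤ x' ∧ (g x' θ' : EReal) - ψ x' = (v θ' : EReal)) →
        ∃ x : ℝ, 0 ≤ x ∧ (g x θ : EReal) - ψ x = (v θ : EReal)) :=
  gSubdiff_of_attained_general Θ g hSM v ψ hψg
end

section
/- Let Θ be a subinterval of ℝ and let g : [0,∞) × Θ → ℝ satisfy the Spence–Mirrlees condition. Suppose v : Θ → ℝ is g-convex and that for every x ≥ 0 there exists θ ∈ Θ such that ∂^g v(θ) = {x} and such that there is θ̃ ∈ Θ with θ̃ > θ and ∂^g v(θ̃) ≠ ∅. Then v^g is the unique function consistent with v in the following sense: if ψ : [0,∞) → ℝ ∪ {+∞} satisfies ψ^g = v on Θ and x ↦ g(x,θ) − ψ(x) is upper semicontinuous for each θ ∈ Θ, then ψ(x) = v^g(x) for all x ≥ 0. -/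
/-!
Fix `x ≥ 0`, a parameter `θ` with `∂^g v(θ) = {x}` and `x' ∈ ∂^g v(θ')` for some `θ' > θ`.
Since `ψ^g = v`, `ψ` dominates `v^g`; in particular `ψ(y) ≥ g(y,θ') - v(θ')`, so
`g(y,θ) - ψ(y) ≤ g(y,θ) - g(y,θ') + v(θ')`. By Spence–Mirrlees the right side is strictly
decreasing in `y`, and at `y = x'` it is at most `v(θ)`. Hence the supremum `ψ^g(θ) = v(θ)`
is only approached on a compact interval `[0, X]`, where upper semicontinuity makes it a
maximum, attained at some `z`. Then `ψ(z) = g(z,θ) - v(θ) ≤ v^g(z) ≤ ψ(z)`, so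
`z ∈ ∂^g v(θ) = {x}` and `ψ(x) = v^g(x)`.
-/

open Set

theorem UpperSemicontinuousOn.exists_isMaxOn_of_le_of_lt_iSup {α β : Type*}
    [TopologicalSpace α] [CompleteLinearOrder β] {f : α → β} {s K : Set α} {c : β}
    (hK : IsCompact K) (hf : UpperSemicontinuousOn f K) (htail : ∀ y ∈ s \ K, f y ≤ c)
    (hc : c < ⨆ y ∈ s, f y) : ∃ z ∈ K, IsMaxOn f s z := by
  have hKne : K.Nonempty := by
    by_contra hK
    exact hc.not_ge <| iSup₂_le fun y hy => htail y ⟨hy, fun hyK => hK ⟨y, hyK⟩⟩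
  obtain ⟨z, hzK, hz⟩ := hf.exists_isMaxOn hKne hK
  have hcz : c < f z := by
    by_contra! hzc
    refine hc.not_ge <| iSup₂_le fun y hy => ?_
    by_cases hyK : y ∈ K
    · exact (hz hyK).trans hzc
    · exact htail y ⟨hy, hyK⟩
  refine ⟨z, hzK, fun y hy => ?_⟩
  by_cases hyK : y ∈ K
  · exact hz hyK
  · exact (htail y ⟨hy, hyK⟩).trans hcz.le

theorem EReal.coe_sub_le_coe_iff (a c : ℝ) (b : EReal) :
    (a : EReal) - b ≤ c ↔ ((a - c : ℝ) : EReal) ≤ b := by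
  rw [EReal.sub_le_iff_le_add (.inr (EReal.coe_ne_top c)) (.inr (EReal.coe_ne_bot c)),
    EReal.coe_sub, EReal.sub_le_iff_le_add (.inl (EReal.coe_ne_bot c)) (.inl (EReal.coe_ne_top c)),
    add_comm]

theorem EReal.coe_le_coe_sub_iff (a c : ℝ) (b : EReal) :
    (c : EReal) ≤ a - b ↔ b ≤ ((a - c : ℝ) : EReal) := by
  rw [EReal.le_sub_iff_add_le (.inr (EReal.coe_ne_bot a)) (.inr (EReal.coe_ne_top a)),
    EReal.coe_sub, EReal.le_sub_iff_add_le (.inl (EReal.coe_ne_bot c)) (.inl (EReal.coe_ne_top c)),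
    add_comm]

theorem SpenceMirrlees.strictAntiOn_sub {Dx Θ : Set ℝ} {g : ℝ → ℝ → ℝ}
    (hSM : SpenceMirrlees Dx Θ g) (hDx : Convex ℝ Dx) {θ θ' : ℝ} (hθ : θ ∈ Θ) (hθ' : θ' ∈ Θ)
    (hlt : θ < θ') : StrictAntiOn (fun y => g y θ - g y θ') Dx := by
  have hdiff : ∀ t : ℝ, Differentiable ℝ (fun y => g y t) := fun t =>
    (hSM.1.differentiable (by norm_num)).comp (differentiable_id.prodMk (differentiable_const t))
  refine strictAntiOn_of_deriv_neg hDx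
    ((hdiff θ).continuous.sub (hdiff θ').continuous).continuousOn fun y hy => ?_
  rw [deriv_fun_sub (hdiff θ y) (hdiff θ' y), sub_neg]
  exact hSM.2.1 y (interior_subset hy) hθ hθ' hlt

section GDual

variable {Θ : Set ℝ} {g : ℝ → ℝ → ℝ} {v : ℝ → ℝ}

theorem coe_sub_le_gDualV {x θ : ℝ} (hθ : θ ∈ Θ) :
    ((g x θ - v θ : ℝ) : EReal) ≤ gDualV Θ g v x :=
  le_iSup₂_of_le (f := fun t (_ : t ∈ Θ) => (g x t : EReal) - v t) θ hθ le_rfl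

theorem gDualV_eq_of_mem_gSubdiff {x θ : ℝ} (hx : x ∈ gSubdiff Θ g v θ) :
    gDualV Θ g v x = ((g x θ - v θ : ℝ) : EReal) := by
  rw [EReal.coe_sub, ← hx.2, EReal.add_sub_cancel_left]

theorem sub_le_of_mem_gSubdiff {x θ θ' : ℝ} (hx : x ∈ gSubdiff Θ g v θ') (hθ : θ ∈ Θ) :
    g x θ - v θ ≤ g x θ' - v θ' := by
  have h := coe_sub_le_gDualV (g := g) (v := v) (x := x) hθ
  rwa [gDualV_eq_of_mem_gSubdiff hx, EReal.coe_le_coe_iff] at h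

variable {ψ : ℝ → EReal} (hψ : ∀ θ ∈ Θ, gDualW g ψ θ = v θ)
include hψ

theorem sub_le_of_gDualW_eq {y θ : ℝ} (hy : 0 ≤ y) (hθ : θ ∈ Θ) :
    (g y θ : EReal) - ψ y ≤ v θ :=
  hψ θ hθ ▸ le_iSup₂_of_le (f := fun z (_ : z ∈ Ici (0 : ℝ)) => (g z θ : EReal) - ψ z) y hy le_rfl

theorem gDualV_le_of_gDualW_eq {y : ℝ} (hy : 0 ≤ y) : gDualV Θ g v y ≤ ψ y :=
  iSup₂_le fun θ hθ => by
    rw [← EReal.coe_sub, ← EReal.coe_sub_le_coe_iff]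
    exact sub_le_of_gDualW_eq hψ hy hθ

theorem sub_le_sub_add_of_gDualW_eq {y θ θ' : ℝ} (hy : 0 ≤ y) (hθ' : θ' ∈ Θ) :
    (g y θ : EReal) - ψ y ≤ ((g y θ - g y θ' + v θ' : ℝ) : EReal) := by
  have h := (coe_sub_le_gDualV hθ').trans (gDualV_le_of_gDualW_eq hψ hy)
  rw [show g y θ - g y θ' + v θ' = g y θ - (g y θ' - v θ') by ring, EReal.coe_sub]
  exact EReal.sub_le_sub le_rfl h

theorem mem_gSubdiff_of_gDualW_eq {z θ : ℝ} (hθ : θ ∈ Θ) (hz : 0 ≤ z)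
    (hmax : (g z θ : EReal) - ψ z = v θ) :
    z ∈ gSubdiff Θ g v θ ∧ ψ z = gDualV Θ g v z := by
  have hψz : ψ z ≤ ((g z θ - v θ : ℝ) : EReal) :=
    (EReal.coe_le_coe_sub_iff _ _ _).1 hmax.ge
  have hdual : gDualV Θ g v z = ((g z θ - v θ : ℝ) : EReal) :=
    le_antisymm ((gDualV_le_of_gDualW_eq hψ hz).trans hψz) (coe_sub_le_gDualV hθ)
  refine ⟨⟨hz, ?_⟩, le_antisymm (hdual ▸ hψz) (gDualV_le_of_gDualW_eq hψ hz)⟩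
  rw [hdual, ← EReal.coe_add, add_sub_cancel]

end GDual

theorem unique_dual_of_singleton_subdiff_general
    (Θ : Set ℝ)
    (g : ℝ → ℝ → ℝ) (hSM : SpenceMirrlees (Ici 0) Θ g)
    (v : ℝ → ℝ)
    (hrange : ∀ x : ℝ, 0 ≤ x → ∃ θ ∈ Θ, gSubdiff Θ g v θ = {x} ∧
      ∃ θ' ∈ Θ, θ < θ' ∧ (gSubdiff Θ g v θ').Nonempty) :
    ∀ ψ : ℝ → EReal,
      (∀ θ ∈ Θ, gDualW g ψ θ = (v θ : EReal)) →
      (∀ θ ∈ Θ, UpperSemicontinuousOn (fun x => (g x θ : EReal) - ψ x) (Ici 0)) →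
      ∀ x : ℝ, 0 ≤ x → ψ x = gDualV Θ g v x := by
  intro ψ hψ husc x hx
  obtain ⟨θ, hθ, hsing, θ', hθ', hlt, x', hx'⟩ := hrange x hx
  set h : ℝ → ℝ := fun y => g y θ - g y θ' + v θ'
  have hanti : StrictAntiOn h (Ici 0) := fun a ha b hb hab => by
    simpa [h] using hSM.strictAntiOn_sub (convex_Ici 0) hθ hθ' hlt ha hb hab
  have hX : 0 ≤ x' + 1 := by linarith [hx'.1]
  have hc : (h (x' + 1) : EReal) < ⨆ y ∈ Ici (0 : ℝ), (g y θ : EReal) - ψ y := by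
    rw [← gDualW, hψ θ hθ, EReal.coe_lt_coe_iff]
    calc h (x' + 1) < h x' := hanti hx'.1 hX (by linarith)
      _ ≤ v θ := by linarith [sub_le_of_mem_gSubdiff hx' hθ]
  have htail : ∀ y ∈ Ici 0 \ Icc 0 (x' + 1), (g y θ : EReal) - ψ y ≤ h (x' + 1) := by
    rintro y ⟨hy, hyK⟩
    have hXy : x' + 1 < y := lt_of_not_ge fun hle => hyK ⟨hy, hle⟩
    exact (sub_le_sub_add_of_gDualW_eq hψ hy hθ').trans
      (EReal.coe_le_coe_iff.2 (hanti hX hy hXy).le)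
  obtain ⟨z, hzK, hzmax⟩ := ((husc θ hθ).mono Icc_subset_Ici_self).exists_isMaxOn_of_le_of_lt_iSup
    isCompact_Icc htail hc
  have hmax : (g z θ : EReal) - ψ z = v θ :=
    le_antisymm (sub_le_of_gDualW_eq hψ hzK.1 hθ) (hψ θ hθ ▸ iSup₂_le fun y hy => hzmax hy)
  obtain ⟨hzsub, hψz⟩ := mem_gSubdiff_of_gDualW_eq hψ hθ hzK.1 hmax
  rw [hsing, mem_singleton_iff] at hzsub
  exact hzsub ▸ hψz

/-- Suppose `v` is `g`-convex, and for every `x ≥ 0` there is `θ ∈ Θ` with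
`∂^g v(θ) = {x}` and with some `θ' ∈ Θ`, `θ' > θ`, having nonempty `g`-subdifferential.
Then any `ψ` with `ψ^g = v` on `Θ` and `x ↦ g(x,θ) - ψ(x)` upper semicontinuous for
each `θ ∈ Θ` satisfies `ψ = v^g` on `[0,∞)`. -/
theorem unique_dual_of_singleton_subdiff
    (Θ : Set ℝ) (hΘ : Θ.Nonempty) (hΘI : Θ.OrdConnected)
    (g : ℝ → ℝ → ℝ) (hSM : SpenceMirrlees (Ici 0) Θ g)
    (v : ℝ → ℝ) (hvconv : GConvex Θ g v)
    (hrange : ∀ x : ℝ, 0 ≤ x → ∃ θ ∈ Θ, gSubdiff Θ g v θ = {x} ∧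
      ∃ θ' ∈ Θ, θ < θ' ∧ (gSubdiff Θ g v θ').Nonempty) :
    ∀ ψ : ℝ → EReal,
      (∀ θ ∈ Θ, gDualW g ψ θ = (v θ : EReal)) →
      (∀ θ ∈ Θ, UpperSemicontinuousOn (fun x => (g x θ : EReal) - ψ x) (Ici 0)) →
      ∀ x : ℝ, 0 ≤ x → ψ x = gDualV Θ g v x :=
  unique_dual_of_singleton_subdiff_general Θ g hSM v hrange
end
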